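/- Let c₂ ∈ ℂ be arbitrary and let c₃ ∈ ℂ with c₃ ≠ 0. Then there is no function a₃₂ : ℂ → ℂ satisfying both a₃₂(z) c₂ = c₃² φ₂(c₃ z) for all z ∈ ℂ and a₃₂(z) c₂²/2 = c₃³ φ₃(c₃ z) for all z ∈ ℂ. -/

import Mathlib

/-!
Differentiating `θ ↦ exp((1-θ)w) θ^(k+1)/(k+1)!` and integrating over `[0, 1]` gives the recurrence
`w φ_{k+2}(w) = φ_{k+1}(w) - 1/(k+1)!`. The two hypotheses force `c₂ φ₂ = 2 c₃ φ₃`, and with the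
recurrence for `φ₃` this becomes `(c₂ w - 2 c₃) φ₂(w) = -c₃` for every `w`. Evaluating at the
zero `w = 2 c₃ / c₂` of the left factor (or, when `c₂ = 0`, using that the first hypothesis
then makes `φ₂` vanish) yields `c₃ = 0`.
-/

/-- For `k ≥ 1`, `φ_k(z) = ∫_0^1 exp((1-θ)z) θ^(k-1)/(k-1)! dθ`; `φ_0(z) = exp z`. -/
noncomputable def phi : ℕ → ℂ → ℂ
  | 0 => fun z => Complex.exp z
  | (k + 1) => fun z =>
      ∫ θ in (0:ℝ)..1, Complex.exp ((1 - (θ : ℂ)) * z) * (θ : ℂ) ^ k / (Nat.factorial k : ℂ)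

noncomputable def phiIntegrand (w : ℂ) (k : ℕ) (θ : ℝ) : ℂ :=
  Complex.exp ((1 - (θ : ℂ)) * w) * (θ : ℂ) ^ k / (k.factorial : ℂ)

lemma phi_succ_eq_integral (k : ℕ) (w : ℂ) :
    phi (k + 1) w = ∫ θ in (0 : ℝ)..1, phiIntegrand w k θ := rfl

lemma continuous_phiIntegrand (w : ℂ) (k : ℕ) : Continuous (phiIntegrand w k) := by
  unfold phiIntegrand
  fun_prop

lemma hasDerivAt_phiIntegrand_succ (w : ℂ) (k : ℕ) (θ : ℝ) :
    HasDerivAt (phiIntegrand w (k + 1))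
      (phiIntegrand w k θ - w * phiIntegrand w (k + 1) θ) θ := by
  have hexp : HasDerivAt (fun z : ℂ => Complex.exp ((1 - z) * w))
      (Complex.exp ((1 - θ) * w) * (-w)) (θ : ℂ) := by
    have : HasDerivAt (fun z : ℂ => (1 - z) * w) (-w) (θ : ℂ) := by
      simpa using ((hasDerivAt_id (θ : ℂ)).const_sub 1).mul_const w
    exact this.cexp
  have hprod : HasDerivAt
      (fun z : ℂ => Complex.exp ((1 - z) * w) * z ^ (k + 1) / ((k + 1).factorial : ℂ))
      (phiIntegrand w k θ - w * phiIntegrand w (k + 1) θ) (θ : ℂ) := by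
    refine ((hexp.mul (hasDerivAt_pow (k + 1) (θ : ℂ))).div_const _).congr_deriv ?_
    simp only [phiIntegrand, Nat.factorial_succ, Nat.cast_mul, Nat.cast_succ, Nat.add_sub_cancel]
    field_simp
    ring
  exact hprod.comp_ofReal

theorem mul_phi_succ_succ (k : ℕ) (w : ℂ) :
    w * phi (k + 2) w = phi (k + 1) w - 1 / ((k + 1).factorial : ℂ) := by
  have hint : ∀ j, IntervalIntegrable (phiIntegrand w j) MeasureTheory.volume 0 1 :=
    fun j => (continuous_phiIntegrand w j).intervalIntegrable 0 1
  have hftc := intervalIntegral.integral_eq_sub_of_hasDerivAt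
    (fun θ _ => hasDerivAt_phiIntegrand_succ w k θ) ((hint k).sub ((hint (k + 1)).const_mul w))
  rw [intervalIntegral.integral_sub (hint k) ((hint (k + 1)).const_mul w),
    intervalIntegral.integral_const_mul] at hftc
  rw [phi_succ_eq_integral, phi_succ_eq_integral]
  have hend₁ : phiIntegrand w (k + 1) 1 = 1 / ((k + 1).factorial : ℂ) := by
    simp [phiIntegrand]
  have hend₀ : phiIntegrand w (k + 1) 0 = 0 := by
    simp [phiIntegrand]
  rw [hend₁, hend₀, sub_zero] at hftc
  linear_combination -hftc

theorem stmt_6 (c₂ c₃ : ℂ) (hc₃ : c₃ ≠ 0) :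
    ¬ ∃ a₃₂ : ℂ → ℂ,
      (∀ z : ℂ, a₃₂ z * c₂ = c₃ ^ 2 * phi 2 (c₃ * z)) ∧
      (∀ z : ℂ, a₃₂ z * c₂ ^ 2 / 2 = c₃ ^ 3 * phi 3 (c₃ * z)) := by
  rintro ⟨a, h₂, h₃⟩
  have hφ₂₃ : ∀ w, c₂ * phi 2 w = 2 * c₃ * phi 3 w := by
    intro w
    have e₂ := h₂ (w / c₃)
    have e₃ := h₃ (w / c₃)
    rw [mul_div_cancel₀ _ hc₃] at e₂ e₃
    refine mul_left_cancel₀ (pow_ne_zero 2 hc₃) ?_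
    linear_combination -c₂ * e₂ + 2 * e₃
  have hlin : ∀ w, (c₂ * w - 2 * c₃) * phi 2 w = -c₃ := by
    intro w
    have hrec := mul_phi_succ_succ 1 w
    norm_num at hrec
    linear_combination w * hφ₂₃ w + 2 * c₃ * hrec
  by_cases hc₂ : c₂ = 0
  · have hφ₂ : phi 2 0 = 0 := by simpa [hc₂, hc₃] using (h₂ 0).symm
    have := hlin 0
    rw [hφ₂, mul_zero, eq_comm, neg_eq_zero] at this
    exact hc₃ this
  · have := hlin (2 * c₃ / c₂)
    rw [mul_div_cancel₀ _ hc₂, sub_self, zero_mul] at this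
    exact hc₃ (neg_eq_zero.mp this.symm)
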